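/- arXiv:2411.05308 — 3 statements merged into one kernel-verified Lean document; each statement's English description precedes it below -/
import Mathlib

section
/- Let L > 0, λ ∈ ℝ and ε > 0. Let u : ℝ → ℝ → ℂ (time, space) be twice continuously differentiable jointly in (t,x), L-periodic in space (u t (x+L) = u t x for all t, x), and satisfy the regularized logarithmic Schrödinger equation i ∂ₜu(t,x) + ∂ₓₓu(t,x) = λ · u(t,x) · ln((ε + |u(t,x)|)²) for all t, x. Then the regularized energy E(t) = ∫_{0}^{L} ( |∂ₓu(t,x)|² + 2ελ|u(t,x)| + 2λ(|u(t,x)|² − ε²) ln(ε + |u(t,x)|) ) dx is independent of t, i.e. E(t₁) = E(t₂) for all t₁, t₂ ∈ ℝ. -/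
/-!
The energy density `e = |∂ₓu|² + G(|u|)`, with `G(r) = 2ελr + 2λ(r² - ε²) ln(ε + r)`, obeys the
local conservation law `∂ₜe = ∂ₓw` for the flux `w = 2⟪∂ₓu, ∂ₜu⟫ + 2λ⟪u, i ∂ₓu⟫`: differentiating
`w` in `x` produces `∂ₓ²u`, which the equation replaces by `λ u ln((ε + |u|)²) - i ∂ₜu`, and
`∂ₓ∂ₜu = ∂ₜ∂ₓu`. Since `G'(r) = 2λr (ln((ε + r)²) + 1)` vanishes at `r = 0`, `G(|u|)` is
differentiable in `t` even where `u` vanishes. Integrating over a period, the flux terms cancel,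
so the energy has zero time derivative.
-/

open Complex Filter Topology Asymptotics
open scoped RealInnerProductSpace

-- `F'(r) = r g(r)` makes `F ∘ ‖·‖` differentiable also at `0`, where the norm is not.
theorem HasDerivAt.comp_norm_of_hasDerivAt_mul {E : Type*} [NormedAddCommGroup E]
    [InnerProductSpace ℝ E] {F g : ℝ → ℝ} (hF : ∀ r, 0 ≤ r → HasDerivAt F (r * g r) r)
    {γ : ℝ → E} {γ' : E} {t : ℝ} (hγ : HasDerivAt γ γ' t) :
    HasDerivAt (fun s => F ‖γ s‖) (g ‖γ t‖ * ⟪γ t, γ'⟫) t := by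
  rcases eq_or_ne (γ t) 0 with h0 | h0
  · have hF0 : (fun r => F r - F 0) =o[𝓝 0] fun r => r := by
      simpa using (hF 0 le_rfl).isLittleO
    have hγ0 : Tendsto (fun s => ‖γ s‖) (𝓝 t) (𝓝 0) := by
      simpa [h0] using hγ.continuousAt.norm.tendsto
    have hγO : (fun s => ‖γ s‖) =O[𝓝 t] fun s => s - t := by
      simpa [h0] using hγ.hasFDerivAt.isBigO_sub.norm_left
    rw [hasDerivAt_iff_isLittleO]
    simp only [h0, norm_zero, inner_zero_left, mul_zero, smul_zero, sub_zero]
    exact (hF0.comp_tendsto hγ0).trans_isBigO hγO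
  · have hnorm : HasDerivAt (fun s => ‖γ s‖) (2 * ⟪γ t, γ'⟫ / (2 * ‖γ t‖)) t := by
      simpa [Real.sqrt_sq (norm_nonneg _)] using hγ.norm_sq.sqrt (by positivity)
    refine ((hF ‖γ t‖ (norm_nonneg _)).comp t hnorm).congr_deriv ?_
    field_simp

section ParametricIntegral

variable {E : Type*} [NormedAddCommGroup E] [NormedSpace ℝ E]

theorem hasDerivAt_intervalIntegral_of_continuous {F F' : ℝ × ℝ → E}
    (hF : Continuous F) (hF' : Continuous F')
    (hderiv : ∀ t x, HasDerivAt (fun s => F (s, x)) (F' (t, x)) t) (a b t₀ : ℝ) :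
    HasDerivAt (fun t => ∫ x in a..b, F (t, x)) (∫ x in a..b, F' (t₀, x)) t₀ := by
  obtain ⟨C, hC⟩ := ((isCompact_closedBall t₀ 1).prod isCompact_uIcc).exists_bound_of_continuousOn
    (f := F') (s := _ ×ˢ Set.uIcc a b) hF'.continuousOn
  exact (intervalIntegral.hasDerivAt_integral_of_dominated_loc_of_deriv_le
    (bound := fun _ => C) (Metric.ball_mem_nhds t₀ one_pos)
    (.of_forall fun t => (hF.comp (.prodMk_right t)).aestronglyMeasurable)
    ((hF.comp (.prodMk_right t₀)).intervalIntegrable a b)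
    (hF'.comp (.prodMk_right t₀)).aestronglyMeasurable
    (.of_forall fun x hx t ht => hC (t, x)
      ⟨Metric.ball_subset_closedBall ht, Set.uIoc_subset_uIcc hx⟩)
    intervalIntegrable_const (.of_forall fun x _ t _ => hderiv t x)).2

theorem intervalIntegral_eq_of_hasDerivAt_flux [CompleteSpace E] {e e' w : ℝ × ℝ → E} {a b : ℝ}
    (he : Continuous e) (he' : Continuous e')
    (hdt : ∀ t x, HasDerivAt (fun s => e (s, x)) (e' (t, x)) t)
    (hdx : ∀ t x, HasDerivAt (fun y => w (t, y)) (e' (t, x)) x)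
    (hw : ∀ t, w (t, a) = w (t, b)) (t₁ t₂ : ℝ) :
    ∫ x in a..b, e (t₁, x) = ∫ x in a..b, e (t₂, x) := by
  have hE : ∀ t, HasDerivAt (fun t => ∫ x in a..b, e (t, x)) 0 t := fun t => by
    have hflux : ∫ x in a..b, e' (t, x) = 0 := by
      rw [intervalIntegral.integral_eq_sub_of_hasDerivAt (fun x _ => hdx t x)
        ((he'.comp (.prodMk_right t)).intervalIntegrable a b), hw, sub_self]
    simpa [hflux] using hasDerivAt_intervalIntegral_of_continuous he he' hdt a b t
  exact is_const_of_deriv_eq_zero (fun t => (hE t).differentiableAt) (fun t => (hE t).deriv) t₁ t₂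

end ParametricIntegral

section PartialDeriv

variable {E : Type*} [NormedAddCommGroup E] [NormedSpace ℝ E] {f : ℝ × ℝ → E}

-- `partialFst` and `partialSnd` are `∂ₜ` and `∂ₓ` for functions of `(t, x)`.
noncomputable def partialFst (f : ℝ × ℝ → E) (p : ℝ × ℝ) : E := fderiv ℝ f p (1, 0)

noncomputable def partialSnd (f : ℝ × ℝ → E) (p : ℝ × ℝ) : E := fderiv ℝ f p (0, 1)

theorem DifferentiableAt.hasDerivAt_partialFst {t x : ℝ} (hf : DifferentiableAt ℝ f (t, x)) :
    HasDerivAt (fun s => f (s, x)) (partialFst f (t, x)) t :=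
  hf.hasFDerivAt.comp_hasDerivAt t ((hasDerivAt_id t).prodMk (hasDerivAt_const t x))

theorem DifferentiableAt.hasDerivAt_partialSnd {t x : ℝ} (hf : DifferentiableAt ℝ f (t, x)) :
    HasDerivAt (fun y => f (t, y)) (partialSnd f (t, x)) x :=
  hf.hasFDerivAt.comp_hasDerivAt x ((hasDerivAt_const x t).prodMk (hasDerivAt_id x))

theorem ContDiff.partialFst {n : WithTop ℕ∞} (hf : ContDiff ℝ (n + 1) f) :
    ContDiff ℝ n (partialFst f) :=
  (hf.fderiv_right le_rfl).clm_apply contDiff_const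

theorem ContDiff.partialSnd {n : WithTop ℕ∞} (hf : ContDiff ℝ (n + 1) f) :
    ContDiff ℝ n (partialSnd f) :=
  (hf.fderiv_right le_rfl).clm_apply contDiff_const

theorem partialFst_partialSnd_comm (hf : ContDiff ℝ 2 f) :
    partialFst (partialSnd f) = partialSnd (partialFst f) := by
  ext p
  have hdf : DifferentiableAt ℝ (fderiv ℝ f) p :=
    (hf.fderiv_right (m := 1) le_rfl).differentiable one_ne_zero p
  change fderiv ℝ (fun q => fderiv ℝ f q (0, 1)) p (1, 0)
    = fderiv ℝ (fun q => fderiv ℝ f q (1, 0)) p (0, 1)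
  simpa [fderiv_clm_apply hdf (differentiableAt_const _)]
    using hf.contDiffAt.isSymmSndFDerivAt (by simp) (1, 0) (0, 1)

theorem Function.Periodic.fderiv {c : ℝ × ℝ} (hf : Function.Periodic f c) :
    Function.Periodic (fderiv ℝ f) c := fun p => by
  rw [← fderiv_comp_add_right, funext hf]

theorem Function.Periodic.partialFst {c : ℝ × ℝ} (hf : Function.Periodic f c) :
    Function.Periodic (_root_.partialFst f) c := fun p => by
  simp only [_root_.partialFst, hf.fderiv p]

theorem Function.Periodic.partialSnd {c : ℝ × ℝ} (hf : Function.Periodic f c) :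
    Function.Periodic (_root_.partialSnd f) c := fun p => by
  simp only [_root_.partialSnd, hf.fderiv p]

end PartialDeriv

noncomputable def rlogsePotential (lam ε r : ℝ) : ℝ :=
  2 * ε * lam * r + 2 * lam * (r ^ 2 - ε ^ 2) * Real.log (ε + r)

theorem hasDerivAt_rlogsePotential (lam : ℝ) {ε r : ℝ} (h : 0 < ε + r) :
    HasDerivAt (rlogsePotential lam ε) (r * (2 * lam * (Real.log ((ε + r) ^ 2) + 1))) r := by
  have hlog : HasDerivAt (fun r => Real.log (ε + r)) (1 / (ε + r)) r := by
    simpa using ((hasDerivAt_id r).const_add ε).log h.ne'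
  have hpoly : HasDerivAt (fun r : ℝ => r ^ 2 - ε ^ 2) (2 * r) r := by
    simpa using (hasDerivAt_pow 2 r).sub_const (ε ^ 2)
  refine ((((hasDerivAt_id r).const_mul (2 * ε * lam)).add
    ((hpoly.const_mul (2 * lam)).mul hlog))).congr_deriv ?_
  rw [Real.log_pow]
  field_simp
  ring

section Energy

variable (lam ε : ℝ) (v : ℝ × ℝ → ℂ)

noncomputable def rlogseEnergyDensity (p : ℝ × ℝ) : ℝ :=
  ‖partialSnd v p‖ ^ 2 + rlogsePotential lam ε ‖v p‖

noncomputable def rlogseEnergyRate (p : ℝ × ℝ) : ℝ :=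
  2 * ⟪partialSnd v p, partialFst (partialSnd v) p⟫
    + 2 * lam * (Real.log ((ε + ‖v p‖) ^ 2) + 1) * ⟪v p, partialFst v p⟫

noncomputable def rlogseEnergyFlux (p : ℝ × ℝ) : ℝ :=
  2 * ⟪partialSnd v p, partialFst v p⟫ + 2 * lam * ⟪v p, I * partialSnd v p⟫

variable {lam ε v}

theorem continuous_rlogseEnergyDensity (hε : 0 < ε) (hv : ContDiff ℝ 2 v) :
    Continuous (rlogseEnergyDensity lam ε v) := by
  have : ∀ p, ε + ‖v p‖ ≠ 0 := fun p => by positivity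
  have := hv.continuous
  have := (hv.partialSnd (n := 1)).continuous
  unfold rlogseEnergyDensity rlogsePotential
  fun_prop (disch := assumption)

theorem continuous_rlogseEnergyRate (hε : 0 < ε) (hv : ContDiff ℝ 2 v) :
    Continuous (rlogseEnergyRate lam ε v) := by
  have : ∀ p, (ε + ‖v p‖) ^ 2 ≠ 0 := fun p => by positivity
  have := hv.continuous
  have := (hv.partialFst (n := 1)).continuous
  have := (hv.partialSnd (n := 1)).continuous
  have := ((hv.partialSnd (n := 1)).partialFst (n := 0)).continuous
  unfold rlogseEnergyRate
  fun_prop (disch := assumption)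

theorem hasDerivAt_rlogseEnergyDensity (hε : 0 < ε) (hv : ContDiff ℝ 2 v) (t x : ℝ) :
    HasDerivAt (fun s => rlogseEnergyDensity lam ε v (s, x)) (rlogseEnergyRate lam ε v (t, x)) t :=
  have hux := ((hv.partialSnd (n := 1)).differentiable one_ne_zero (t, x)).hasDerivAt_partialFst
  have hu := (hv.differentiable two_ne_zero (t, x)).hasDerivAt_partialFst
  hux.norm_sq.add <| hu.comp_norm_of_hasDerivAt_mul fun _ hr =>
    hasDerivAt_rlogsePotential lam (by positivity)

-- `⟪zx, I zx⟫ = 0`, and the equation gives `⟪zxx, zt⟫ = λℓ⟪z, zt⟫` and `⟪z, I zxx⟫ = ⟪z, zt⟫`.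
theorem rlogse_energy_identity {ℓ : ℝ} {z zt zx zxx zxt : ℂ} (h : I * zt + zxx = lam * z * ℓ) :
    2 * (⟪zx, zxt⟫ + ⟪zxx, zt⟫) + 2 * lam * (⟪z, I * zxx⟫ + ⟪zx, I * zx⟫)
      = 2 * ⟪zx, zxt⟫ + 2 * lam * (ℓ + 1) * ⟪z, zt⟫ := by
  obtain rfl : zxx = lam * z * ℓ - I * zt := eq_sub_of_add_eq' h
  simp only [Complex.inner, mul_re, sub_re, sub_im, mul_im, conj_re, conj_im, I_re, I_im,
    ofReal_re, ofReal_im]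
  ring

theorem hasDerivAt_rlogseEnergyFlux (hv : ContDiff ℝ 2 v)
    (hpde : ∀ p, I * partialFst v p + partialSnd (partialSnd v) p
      = lam * v p * Real.log ((ε + ‖v p‖) ^ 2)) (t x : ℝ) :
    HasDerivAt (fun y => rlogseEnergyFlux lam v (t, y)) (rlogseEnergyRate lam ε v (t, x)) x := by
  have hu := (hv.differentiable two_ne_zero (t, x)).hasDerivAt_partialSnd
  have hux := ((hv.partialSnd (n := 1)).differentiable one_ne_zero (t, x)).hasDerivAt_partialSnd
  have hut := ((hv.partialFst (n := 1)).differentiable one_ne_zero (t, x)).hasDerivAt_partialSnd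
  rw [← partialFst_partialSnd_comm hv] at hut
  refine (((hux.inner ℝ hut).const_mul 2).add
    ((hu.inner ℝ (hux.const_mul I)).const_mul (2 * lam))).congr_deriv ?_
  exact rlogse_energy_identity (hpde (t, x))

theorem Function.Periodic.rlogseEnergyFlux {c : ℝ × ℝ} (hv : Function.Periodic v c) :
    Function.Periodic (_root_.rlogseEnergyFlux lam v) c := fun p => by
  simp only [_root_.rlogseEnergyFlux, hv p, hv.partialFst p, hv.partialSnd p]

end Energy

theorem rlogse_energy_conservation_1d_general
    (L : ℝ) (lam ε : ℝ) (hε : 0 < ε)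
    (u : ℝ → ℝ → ℂ)
    (hreg : ContDiff ℝ 2 (fun p : ℝ × ℝ => u p.1 p.2))
    (hper : ∀ t x : ℝ, u t (x + L) = u t x)
    (hpde : ∀ t x : ℝ,
      Complex.I * deriv (fun s => u s x) t + deriv (deriv (u t)) x
        = (lam : ℂ) * u t x * (Real.log ((ε + norm (u t x)) ^ 2) : ℂ)) :
    ∀ t₁ t₂ : ℝ,
      (∫ x in (0:ℝ)..L,
          ((norm (deriv (u t₁) x)) ^ 2
            + 2 * ε * lam * norm (u t₁ x)
            + 2 * lam * ((norm (u t₁ x)) ^ 2 - ε ^ 2)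
                * Real.log (ε + norm (u t₁ x))))
        = ∫ x in (0:ℝ)..L,
            ((norm (deriv (u t₂) x)) ^ 2
              + 2 * ε * lam * norm (u t₂ x)
              + 2 * lam * ((norm (u t₂ x)) ^ 2 - ε ^ 2)
                  * Real.log (ε + norm (u t₂ x))) := by
  set v : ℝ × ℝ → ℂ := fun p => u p.1 p.2
  have hv : Differentiable ℝ v := hreg.differentiable two_ne_zero
  have hvx : Differentiable ℝ (partialSnd v) :=
    (hreg.partialSnd (n := 1)).differentiable one_ne_zero
  have hux (t : ℝ) : deriv (u t) = fun x => partialSnd v (t, x) :=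
    funext fun x => (hv (t, x)).hasDerivAt_partialSnd.deriv
  have hpde' (p : ℝ × ℝ) : I * partialFst v p + partialSnd (partialSnd v) p
      = lam * v p * Real.log ((ε + ‖v p‖) ^ 2) := by
    rw [← (hv p).hasDerivAt_partialFst.deriv, ← (hvx p).hasDerivAt_partialSnd.deriv, ← hux]
    exact hpde p.1 p.2
  have hvper : Function.Periodic v (0, L) := fun p => by simpa [v] using hper p.1 p.2
  have hflux (t : ℝ) : rlogseEnergyFlux lam v (t, 0) = rlogseEnergyFlux lam v (t, L) := by
    simpa using (hvper.rlogseEnergyFlux (t, 0)).symm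
  intro t₁ t₂
  convert intervalIntegral_eq_of_hasDerivAt_flux (continuous_rlogseEnergyDensity hε hreg)
    (continuous_rlogseEnergyRate hε hreg) (hasDerivAt_rlogseEnergyDensity hε hreg)
    (hasDerivAt_rlogseEnergyFlux hreg hpde') hflux t₁ t₂ using 2 <;>
    simp only [v, hux, rlogseEnergyDensity, rlogsePotential, add_assoc]

/-- Conservation of the regularized energy for the regularized logarithmic
    Schrödinger equation in 1D with periodic boundary conditions. -/
theorem rlogse_energy_conservation_1d
    (L : ℝ) (hL : 0 < L) (lam ε : ℝ) (hε : 0 < ε)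
    (u : ℝ → ℝ → ℂ)
    (hreg : ContDiff ℝ 2 (fun p : ℝ × ℝ => u p.1 p.2))
    (hper : ∀ t x : ℝ, u t (x + L) = u t x)
    (hpde : ∀ t x : ℝ,
      Complex.I * deriv (fun s => u s x) t + deriv (deriv (u t)) x
        = (lam : ℂ) * u t x * (Real.log ((ε + norm (u t x)) ^ 2) : ℂ)) :
    ∀ t₁ t₂ : ℝ,
      (∫ x in (0:ℝ)..L,
          ((norm (deriv (u t₁) x)) ^ 2
            + 2 * ε * lam * norm (u t₁ x)
            + 2 * lam * ((norm (u t₁ x)) ^ 2 - ε ^ 2)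
                * Real.log (ε + norm (u t₁ x))))
        = ∫ x in (0:ℝ)..L,
            ((norm (deriv (u t₂) x)) ^ 2
              + 2 * ε * lam * norm (u t₂ x)
              + 2 * lam * ((norm (u t₂ x)) ^ 2 - ε ^ 2)
                  * Real.log (ε + norm (u t₂ x))) :=
  rlogse_energy_conservation_1d_general L lam ε hε u hreg hper hpde
end

section
/- Let L₁, L₂ > 0 and λ ∈ ℝ. Let u : ℝ → ℝ → ℝ → ℂ (time and the two space variables) be twice continuously differentiable jointly in (t,x,y), L₁-periodic in x and L₂-periodic in y, nowhere vanishing (u t x y ≠ 0 for all t, x, y), and satisfy the logarithmic Schrödinger equation i ∂ₜu(t,x,y) + ∂ₓₓu(t,x,y) + ∂ᵧᵧu(t,x,y) = λ · u(t,x,y) · ln(|u(t,x,y)|²) for all t, x, y. Then the energy E(t) = ∫_{0}^{L₁} ∫_{0}^{L₂} ( |∂ₓu|² + |∂ᵧu|² + λ|u|² ln(|u|²) ) dy dx is independent of t, i.e. E(t₁) = E(t₂) for all t₁, t₂ ∈ ℝ. -/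
/-!
Differentiating the energy density `e = |∇u|² + λ |u|² ln |u|²` in time and substituting the
equation yields a local conservation law `∂ₜe = ∂ₓP + ∂ᵧQ` with explicit fluxes `P`, `Q` built
from `u` and its first derivatives; the computation needs `∂ₓ∂ₜu = ∂ₜ∂ₓu`, hence `C²`, and
`u ≠ 0` to differentiate `s ↦ s ln s` at `s = |u|²`. The fluxes are periodic, so by the
fundamental theorem of calculus and Fubini the integral of `∂ₓP + ∂ᵧQ` over a period cell
vanishes, and integrating `∂ₜe` in time shows that the energy is constant.
-/

open Complex MeasureTheory intervalIntegral Function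
open scoped InnerProductSpace

section PartialDeriv

variable {E F : Type*} [NormedAddCommGroup E] [NormedSpace ℝ E]
  [NormedAddCommGroup F] [NormedSpace ℝ F]

noncomputable def pderiv (v : E) (f : E → F) : E → F := fun p => fderiv ℝ f p v

variable {f : E → F}

theorem ContDiff.pderiv {m n : WithTop ℕ∞} (hf : ContDiff ℝ n f) (hmn : m + 1 ≤ n) (v : E) :
    ContDiff ℝ m (pderiv v f) :=
  (ContinuousLinearMap.apply ℝ F v).contDiff.comp (hf.fderiv_right hmn)

theorem Function.Periodic.pderiv {c : E} (hf : Periodic f c) (v : E) :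
    Periodic (pderiv v f) c := fun p => by
  simp only [_root_.pderiv, ← fderiv_comp_add_right, hf.funext]

theorem pderiv_comm (hf : ContDiff ℝ 2 f) (v w p : E) :
    pderiv v (pderiv w f) p = pderiv w (pderiv v f) p := by
  have hdiff : Differentiable ℝ (fderiv ℝ f) :=
    (hf.fderiv_right (m := 1) le_rfl).differentiable one_ne_zero
  have hsecond : ∀ a b, pderiv a (pderiv b f) p = fderiv ℝ (fderiv ℝ f) p a b := fun a b => by
    change fderiv ℝ (fun q => fderiv ℝ f q b) p a = _
    rw [fderiv_clm_apply (hdiff p) (differentiableAt_const b)]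
    simp
  rw [hsecond, hsecond]
  exact hf.contDiffAt.isSymmSndFDerivAt (by simp) v w

theorem DifferentiableAt.hasDerivAt_comp_pderiv {γ : ℝ → E} {v : E} {t : ℝ}
    (hf : DifferentiableAt ℝ f (γ t)) (hγ : HasDerivAt γ v t) :
    HasDerivAt (fun s => f (γ s)) (pderiv v f (γ t)) t :=
  hf.hasFDerivAt.comp_hasDerivAt t hγ

theorem deriv_comp_eq_pderiv {γ : ℝ → E} {v : E} {t : ℝ}
    (hf : DifferentiableAt ℝ f (γ t)) (hγ : HasDerivAt γ v t) :
    deriv (fun s => f (γ s)) t = pderiv v f (γ t) :=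
  (hf.hasDerivAt_comp_pderiv hγ).deriv

theorem deriv_deriv_comp_eq_pderiv_pderiv {γ : ℝ → E} {v : E} (hf : ContDiff ℝ 2 f)
    (hγ : ∀ s, HasDerivAt γ v s) (t : ℝ) :
    deriv (deriv fun s => f (γ s)) t = pderiv v (pderiv v f) (γ t) := by
  have hf' : ContDiff ℝ 1 (pderiv v f) := hf.pderiv (by norm_num) v
  have hfirst : deriv (fun s => f (γ s)) = fun s => pderiv v f (γ s) :=
    funext fun s => deriv_comp_eq_pderiv (hf.differentiable (by norm_num) _) (hγ s)
  rw [hfirst]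
  exact deriv_comp_eq_pderiv (hf'.differentiable one_ne_zero _) (hγ t)

theorem DifferentiableAt.pderiv_eq_of_hasDerivAt {γ : ℝ → E} {v : E} {t : ℝ} {d : F}
    (hf : DifferentiableAt ℝ f (γ t)) (hγ : HasDerivAt γ v t)
    (h : HasDerivAt (fun s => f (γ s)) d t) :
    pderiv v f (γ t) = d :=
  (hf.hasDerivAt_comp_pderiv hγ).unique h

theorem exists_hasDerivAt_eq (p v : E) : ∃ γ : ℝ → E, γ 0 = p ∧ HasDerivAt γ v 0 :=
  ⟨fun s => p + s • v, by simp, by simpa using ((hasDerivAt_id (0 : ℝ)).smul_const v).const_add p⟩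

end PartialDeriv

section IteratedIntegral

variable {E : Type*} [NormedAddCommGroup E] [NormedSpace ℝ E]

theorem Function.Periodic.intervalIntegral_eq_zero_of_hasDerivAt [CompleteSpace E]
    {f f' : ℝ → E} {L : ℝ}
    (hf : Periodic f L) (hderiv : ∀ x, HasDerivAt f (f' x) x)
    (hint : IntervalIntegrable f' volume 0 L) :
    ∫ x in 0..L, f' x = 0 := by
  rw [integral_eq_sub_of_hasDerivAt (fun x _ => hderiv x) hint, ← zero_add L, hf, sub_self]

theorem intervalIntegral_integral_swap {f : ℝ → ℝ → E} (hf : Continuous (uncurry f))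
    (a b c d : ℝ) :
    ∫ x in a..b, ∫ y in c..d, f x y = ∫ y in c..d, ∫ x in a..b, f x y := by
  have hint : Integrable (uncurry f)
      ((volume.restrict (Set.uIoc a b)).prod (volume.restrict (Set.uIoc c d))) := by
    rw [Measure.prod_restrict]
    exact (hf.continuousOn.integrableOn_compact (isCompact_uIcc.prod isCompact_uIcc)).mono_set
      (Set.prod_mono Set.uIoc_subset_uIcc Set.uIoc_subset_uIcc)
  simp only [intervalIntegral_eq_integral_uIoc, MeasureTheory.integral_smul]
  rw [integral_integral_swap hint, smul_comm]

theorem integral_integral_add_eq_zero_of_periodic [CompleteSpace E] {P Q P' Q' : ℝ → ℝ → E}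
    {L₁ L₂ : ℝ}
    (hP : ∀ x y, HasDerivAt (P · y) (P' x y) x) (hQ : ∀ x y, HasDerivAt (Q x) (Q' x y) y)
    (hPper : ∀ y, Periodic (P · y) L₁) (hQper : ∀ x, Periodic (Q x) L₂)
    (hP' : Continuous (uncurry P')) (hQ' : Continuous (uncurry Q')) :
    ∫ x in 0..L₁, ∫ y in 0..L₂, (P' x y + Q' x y) = 0 := by
  have hPint : ∀ y, ∫ x in 0..L₁, P' x y = 0 := fun y =>
    (hPper y).intervalIntegral_eq_zero_of_hasDerivAt (fun x => hP x y)
      ((hP'.uncurry_right y).intervalIntegrable _ _)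
  have hQint : ∀ x, ∫ y in 0..L₂, Q' x y = 0 := fun x =>
    (hQper x).intervalIntegral_eq_zero_of_hasDerivAt (hQ x)
      ((hQ'.uncurry_left x).intervalIntegrable _ _)
  calc ∫ x in 0..L₁, ∫ y in 0..L₂, (P' x y + Q' x y)
      = ∫ x in 0..L₁, ∫ y in 0..L₂, P' x y := by
        refine integral_congr fun x _ => ?_
        rw [integral_add ((hP'.uncurry_left x).intervalIntegrable _ _)
          ((hQ'.uncurry_left x).intervalIntegrable _ _), hQint, add_zero]
    _ = ∫ y in 0..L₂, ∫ x in 0..L₁, P' x y := intervalIntegral_integral_swap hP' _ _ _ _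
    _ = 0 := by simp [hPint]

theorem integral_integral_eq_of_hasDerivAt [CompleteSpace E] {e e' : ℝ × ℝ × ℝ → E}
    {a b c d : ℝ} (he : Continuous e) (he' : Continuous e')
    (hderiv : ∀ t x y, HasDerivAt (fun s => e (s, x, y)) (e' (t, x, y)) t)
    (hzero : ∀ t, ∫ x in a..b, ∫ y in c..d, e' (t, x, y) = 0) (t₁ t₂ : ℝ) :
    ∫ x in a..b, ∫ y in c..d, e (t₁, x, y) = ∫ x in a..b, ∫ y in c..d, e (t₂, x, y) := by
  have hFTC : ∀ x y, e (t₂, x, y) = e (t₁, x, y) + ∫ s in t₁..t₂, e' (s, x, y) := fun x y => by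
    rw [integral_eq_sub_of_hasDerivAt (fun s _ => hderiv s x y)
      ((he'.comp (by fun_prop)).intervalIntegrable _ _), add_sub_cancel]
  have hswap : ∫ x in a..b, ∫ y in c..d, ∫ s in t₁..t₂, e' (s, x, y) = 0 :=
    calc _ = ∫ x in a..b, ∫ s in t₁..t₂, ∫ y in c..d, e' (s, x, y) :=
          integral_congr fun x _ => intervalIntegral_integral_swap
            (f := fun y s => e' (s, x, y)) (by fun_prop) _ _ _ _
      _ = ∫ s in t₁..t₂, ∫ x in a..b, ∫ y in c..d, e' (s, x, y) :=
          intervalIntegral_integral_swap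
            (f := fun x s => ∫ y in c..d, e' (s, x, y)) (by fun_prop) _ _ _ _
      _ = 0 := by simp [hzero]
  symm
  calc ∫ x in a..b, ∫ y in c..d, e (t₂, x, y)
      = ∫ x in a..b, ∫ y in c..d, (e (t₁, x, y) + ∫ s in t₁..t₂, e' (s, x, y)) := by
        simp only [hFTC]
    _ = ∫ x in a..b, ((∫ y in c..d, e (t₁, x, y)) + ∫ y in c..d, ∫ s in t₁..t₂, e' (s, x, y)) :=
        integral_congr fun x _ => integral_add (Continuous.intervalIntegrable (by fun_prop) _ _)
          (Continuous.intervalIntegrable (by fun_prop) _ _)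
    _ = ∫ x in a..b, ∫ y in c..d, e (t₁, x, y) := by
        rw [integral_add (Continuous.intervalIntegrable (by fun_prop) _ _)
          (Continuous.intervalIntegrable (by fun_prop) _ _), hswap, add_zero]

theorem integral_integral_eq_of_conservation_law [CompleteSpace E]
    {e P Q P' Q' : ℝ × ℝ × ℝ → E} {L₁ L₂ : ℝ}
    (he : Continuous e) (hP' : Continuous P') (hQ' : Continuous Q')
    (hdt : ∀ t x y, HasDerivAt (fun s => e (s, x, y)) (P' (t, x, y) + Q' (t, x, y)) t)
    (hdx : ∀ t x y, HasDerivAt (fun x => P (t, x, y)) (P' (t, x, y)) x)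
    (hdy : ∀ t x y, HasDerivAt (fun y => Q (t, x, y)) (Q' (t, x, y)) y)
    (hP : Periodic P (0, L₁, 0)) (hQ : Periodic Q (0, 0, L₂)) (t₁ t₂ : ℝ) :
    ∫ x in 0..L₁, ∫ y in 0..L₂, e (t₁, x, y) = ∫ x in 0..L₁, ∫ y in 0..L₂, e (t₂, x, y) :=
  integral_integral_eq_of_hasDerivAt he (hP'.add hQ') hdt
    (fun t => integral_integral_add_eq_zero_of_periodic (hdx t) (hdy t)
      (fun y x => by simpa using hP (t, x, y)) (fun x y => by simpa using hQ (t, x, y))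
      (by fun_prop) (by fun_prop)) t₁ t₂

end IteratedIntegral

local notation "∂ₜ" => pderiv ((1, 0, 0) : ℝ × ℝ × ℝ)
local notation "∂ₓ" => pderiv ((0, 1, 0) : ℝ × ℝ × ℝ)
local notation "∂ᵧ" => pderiv ((0, 0, 1) : ℝ × ℝ × ℝ)

theorem hasDerivAt_timeSlice (t x y : ℝ) :
    HasDerivAt (fun s : ℝ => ((s, x, y) : ℝ × ℝ × ℝ)) (1, 0, 0) t :=
  (hasDerivAt_id t).prodMk (hasDerivAt_const t (x, y))

theorem hasDerivAt_xSlice (t x y : ℝ) :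
    HasDerivAt (fun x' : ℝ => ((t, x', y) : ℝ × ℝ × ℝ)) (0, 1, 0) x :=
  (hasDerivAt_const x t).prodMk ((hasDerivAt_id x).prodMk (hasDerivAt_const x y))

theorem hasDerivAt_ySlice (t x y : ℝ) :
    HasDerivAt (fun y' : ℝ => ((t, x, y') : ℝ × ℝ × ℝ)) (0, 0, 1) y :=
  (hasDerivAt_const y t).prodMk ((hasDerivAt_const y x).prodMk (hasDerivAt_id y))

namespace LogSE

noncomputable def energyDensity (lam : ℝ) (U : ℝ × ℝ × ℝ → ℂ) (p : ℝ × ℝ × ℝ) : ℝ :=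
  ‖∂ₓ U p‖ ^ 2 + ‖∂ᵧ U p‖ ^ 2 + lam * ‖U p‖ ^ 2 * Real.log (‖U p‖ ^ 2)

/-- The second term is the mass current: `∂ₜ |u|² = 2 div ⟪u, i ∇u⟫`, which absorbs the `+ 1`
in `(s ln s)' = ln s + 1`. -/
noncomputable def energyFlux (lam : ℝ) (U : ℝ × ℝ × ℝ → ℂ) (v p : ℝ × ℝ × ℝ) : ℝ :=
  2 * ⟪pderiv v U p, ∂ₜ U p⟫_ℝ + 2 * lam * ⟪U p, I * pderiv v U p⟫_ℝ

theorem pointwise_energy_balance (lam ℓ : ℝ) (a ut Δ : ℂ) (h : I * ut + Δ = lam * a * ℓ) :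
    lam * ((ℓ + 1) * (2 * ⟪a, ut⟫_ℝ)) = 2 * ⟪Δ, ut⟫_ℝ + 2 * lam * ⟪a, I * Δ⟫_ℝ := by
  have hre := congrArg re h
  have him := congrArg im h
  simp only [add_re, add_im, mul_re, mul_im, I_re, I_im, ofReal_re, ofReal_im] at hre him
  simp only [Complex.inner, mul_re, mul_im, I_re, I_im, conj_re, conj_im]
  linear_combination (-2 * ut.re - 2 * lam * a.im) * hre + (-2 * ut.im + 2 * lam * a.re) * him

variable (lam : ℝ) {U : ℝ × ℝ × ℝ → ℂ}

theorem contDiffAt_energyDensity (hU : ContDiff ℝ 2 U) {p : ℝ × ℝ × ℝ} (hp : U p ≠ 0) :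
    ContDiffAt ℝ 1 (energyDensity lam U) p := by
  have hx := (hU.pderiv (m := 1) (by norm_num) (0, 1, 0)).contDiffAt (x := p)
  have hy := (hU.pderiv (m := 1) (by norm_num) (0, 0, 1)).contDiffAt (x := p)
  have h0 := (hU.of_le (m := 1) (by norm_num)).contDiffAt (x := p)
  have hlog : ContDiffAt ℝ 1 (fun q => Real.log (‖U q‖ ^ 2)) p :=
    (h0.norm_sq ℝ).log (pow_ne_zero 2 (norm_ne_zero_iff.2 hp))
  exact ((hx.norm_sq ℝ).add (hy.norm_sq ℝ)).add ((contDiffAt_const.mul (h0.norm_sq ℝ)).mul hlog)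

theorem contDiff_energyFlux (hU : ContDiff ℝ 2 U) (v : ℝ × ℝ × ℝ) :
    ContDiff ℝ 1 (energyFlux lam U v) := by
  have hv := hU.pderiv (m := 1) (by norm_num) v
  have ht := hU.pderiv (m := 1) (by norm_num) (1, 0, 0)
  have h0 : ContDiff ℝ 1 U := hU.of_le (by norm_num)
  exact (contDiff_const.mul (hv.inner ℝ ht)).add
    (contDiff_const.mul (h0.inner ℝ (contDiff_const.mul hv)))

theorem pderiv_energyDensity (hU : ContDiff ℝ 2 U) {p : ℝ × ℝ × ℝ} (hp : U p ≠ 0)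
    (w : ℝ × ℝ × ℝ) :
    pderiv w (energyDensity lam U) p =
      2 * ⟪∂ₓ U p, pderiv w (∂ₓ U) p⟫_ℝ + 2 * ⟪∂ᵧ U p, pderiv w (∂ᵧ U) p⟫_ℝ
        + lam * ((Real.log (‖U p‖ ^ 2) + 1) * (2 * ⟪U p, pderiv w U p⟫_ℝ)) := by
  have hdiff := (contDiffAt_energyDensity lam hU hp).differentiableAt one_ne_zero
  obtain ⟨γ, rfl, hγ⟩ := exists_hasDerivAt_eq p w
  have hcomp {g : ℝ × ℝ × ℝ → ℂ} (hg : ContDiff ℝ 1 g) :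
      HasDerivAt (fun s => g (γ s)) (pderiv w g (γ 0)) 0 :=
    (hg.differentiable one_ne_zero _).hasDerivAt_comp_pderiv hγ
  have hx := hcomp (hU.pderiv (by norm_num) (0, 1, 0))
  have hy := hcomp (hU.pderiv (by norm_num) (0, 0, 1))
  have h0 := (hcomp (hU.of_le (by norm_num))).norm_sq
  have hlog := (Real.hasDerivAt_mul_log (pow_ne_zero 2 (norm_ne_zero_iff.2 hp))).comp 0 h0
  refine hdiff.pderiv_eq_of_hasDerivAt hγ ?_
  convert (hx.norm_sq.add hy.norm_sq).add (hlog.const_mul lam) using 1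
  funext s
  simp only [energyDensity, Function.comp_apply, Pi.add_apply, mul_assoc]

theorem pderiv_energyFlux (hU : ContDiff ℝ 2 U) (v p : ℝ × ℝ × ℝ) :
    pderiv v (energyFlux lam U v) p =
      2 * ⟪pderiv v (pderiv v U) p, ∂ₜ U p⟫_ℝ + 2 * ⟪pderiv v U p, pderiv v (∂ₜ U) p⟫_ℝ
        + 2 * lam * ⟪U p, I * pderiv v (pderiv v U) p⟫_ℝ := by
  have hdiff := (contDiff_energyFlux lam hU v).differentiable one_ne_zero p
  obtain ⟨γ, rfl, hγ⟩ := exists_hasDerivAt_eq p v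
  have hcomp {g : ℝ × ℝ × ℝ → ℂ} (hg : ContDiff ℝ 1 g) :
      HasDerivAt (fun s => g (γ s)) (pderiv v g (γ 0)) 0 :=
    (hg.differentiable one_ne_zero _).hasDerivAt_comp_pderiv hγ
  have hv := hcomp (hU.pderiv (by norm_num) v)
  have ht := hcomp (hU.pderiv (by norm_num) (1, 0, 0))
  have h0 := hcomp (hU.of_le (by norm_num))
  refine hdiff.pderiv_eq_of_hasDerivAt hγ ?_
  convert ((hv.inner ℝ ht).const_mul 2).add ((h0.inner ℝ (hv.const_mul I)).const_mul (2 * lam))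
    using 1
  · rfl
  · have hzero : ⟪pderiv v U (γ 0), I * pderiv v U (γ 0)⟫_ℝ = 0 := real_inner_I_smul_self ℂ _
    linear_combination (-2 * lam) * hzero

theorem periodic_energyFlux {c : ℝ × ℝ × ℝ} (hU : Periodic U c) (v : ℝ × ℝ × ℝ) :
    Periodic (energyFlux lam U v) c := fun p => by
  simp only [energyFlux, hU p, hU.pderiv v p, hU.pderiv (1, 0, 0) p]

theorem local_energy_conservation (hU : ContDiff ℝ 2 U) {p : ℝ × ℝ × ℝ} (hp : U p ≠ 0)
    (hpde : I * ∂ₜ U p + ∂ₓ (∂ₓ U) p + ∂ᵧ (∂ᵧ U) p = lam * U p * (Real.log (‖U p‖ ^ 2) : ℂ)) :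
    ∂ₜ (energyDensity lam U) p =
      ∂ₓ (energyFlux lam U (0, 1, 0)) p + ∂ᵧ (energyFlux lam U (0, 0, 1)) p := by
  have hrate := pointwise_energy_balance lam (Real.log (‖U p‖ ^ 2)) (U p) (∂ₜ U p)
    (∂ₓ (∂ₓ U) p + ∂ᵧ (∂ᵧ U) p) (by rw [← hpde]; ring)
  simp only [mul_add, inner_add_left, inner_add_right] at hrate
  rw [pderiv_energyDensity lam hU hp, pderiv_energyFlux lam hU, pderiv_energyFlux lam hU,
    pderiv_comm hU (1, 0, 0) (0, 1, 0), pderiv_comm hU (1, 0, 0) (0, 0, 1)]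
  linarith

theorem energy_conservation {L₁ L₂ : ℝ} (hU : ContDiff ℝ 2 U) (hne : ∀ p, U p ≠ 0)
    (hperx : Periodic U (0, L₁, 0)) (hpery : Periodic U (0, 0, L₂))
    (hpde : ∀ p,
      I * ∂ₜ U p + ∂ₓ (∂ₓ U) p + ∂ᵧ (∂ᵧ U) p = lam * U p * (Real.log (‖U p‖ ^ 2) : ℂ))
    (t₁ t₂ : ℝ) :
    ∫ x in 0..L₁, ∫ y in 0..L₂, energyDensity lam U (t₁, x, y) =
      ∫ x in 0..L₁, ∫ y in 0..L₂, energyDensity lam U (t₂, x, y) := by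
  have he (p : ℝ × ℝ × ℝ) := contDiffAt_energyDensity lam hU (hne p)
  have hP := contDiff_energyFlux lam hU (0, 1, 0)
  have hQ := contDiff_energyFlux lam hU (0, 0, 1)
  refine integral_integral_eq_of_conservation_law (contDiff_iff_contDiffAt.2 he).continuous
    (hP.pderiv (m := 0) (by simp) _).continuous (hQ.pderiv (m := 0) (by simp) _).continuous
    (fun t x y => ?_)
    (fun t x y =>
      (hP.differentiable one_ne_zero _).hasDerivAt_comp_pderiv (hasDerivAt_xSlice t x y))
    (fun t x y =>
      (hQ.differentiable one_ne_zero _).hasDerivAt_comp_pderiv (hasDerivAt_ySlice t x y))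
    (periodic_energyFlux lam hperx _) (periodic_energyFlux lam hpery _) t₁ t₂
  rw [← local_energy_conservation lam hU (hne _) (hpde _)]
  exact ((he _).differentiableAt one_ne_zero).hasDerivAt_comp_pderiv (hasDerivAt_timeSlice t x y)

end LogSE

theorem logse_energy_conservation_2d_general
    (L₁ L₂ : ℝ) (lam : ℝ)
    (u : ℝ → ℝ → ℝ → ℂ)
    (hreg : ContDiff ℝ 2 (fun p : ℝ × ℝ × ℝ => u p.1 p.2.1 p.2.2))
    (hperx : ∀ t x y : ℝ, u t (x + L₁) y = u t x y)
    (hpery : ∀ t x y : ℝ, u t x (y + L₂) = u t x y)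
    (hne : ∀ t x y : ℝ, u t x y ≠ 0)
    (hpde : ∀ t x y : ℝ,
      Complex.I * deriv (fun s => u s x y) t
        + deriv (deriv (fun x' => u t x' y)) x
        + deriv (deriv (u t x)) y
        = (lam : ℂ) * u t x y * (Real.log ((‖u t x y‖) ^ 2) : ℂ)) :
    ∀ t₁ t₂ : ℝ,
      (∫ x in (0:ℝ)..L₁, ∫ y in (0:ℝ)..L₂,
          ((‖deriv (fun x' => u t₁ x' y) x‖) ^ 2
            + (‖deriv (u t₁ x) y‖) ^ 2
            + lam * (‖u t₁ x y‖) ^ 2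
                * Real.log ((‖u t₁ x y‖) ^ 2)))
        = ∫ x in (0:ℝ)..L₁, ∫ y in (0:ℝ)..L₂,
            ((‖deriv (fun x' => u t₂ x' y) x‖) ^ 2
              + (‖deriv (u t₂ x) y‖) ^ 2
              + lam * (‖u t₂ x y‖) ^ 2
                  * Real.log ((‖u t₂ x y‖) ^ 2)) := by
  intro t₁ t₂
  set U : ℝ × ℝ × ℝ → ℂ := fun p => u p.1 p.2.1 p.2.2
  have hdiff : Differentiable ℝ U := hreg.differentiable (by norm_num)
  have hdx (t x y : ℝ) : deriv (fun x' => u t x' y) x = ∂ₓ U (t, x, y) :=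
    deriv_comp_eq_pderiv (hdiff _) (hasDerivAt_xSlice t x y)
  have hdy (t x y : ℝ) : deriv (u t x) y = ∂ᵧ U (t, x, y) :=
    deriv_comp_eq_pderiv (hdiff _) (hasDerivAt_ySlice t x y)
  have hpde' (p : ℝ × ℝ × ℝ) :
      I * ∂ₜ U p + ∂ₓ (∂ₓ U) p + ∂ᵧ (∂ᵧ U) p = lam * U p * (Real.log (‖U p‖ ^ 2) : ℂ) := by
    obtain ⟨t, x, y⟩ := p
    rw [← deriv_comp_eq_pderiv (hdiff _) (hasDerivAt_timeSlice t x y),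
      ← deriv_deriv_comp_eq_pderiv_pderiv hreg (hasDerivAt_xSlice t · y),
      ← deriv_deriv_comp_eq_pderiv_pderiv hreg (hasDerivAt_ySlice t x ·)]
    exact hpde t x y
  simp only [hdx, hdy]
  exact LogSE.energy_conservation lam hreg (fun p => hne _ _ _)
    (fun p => by simpa [U] using hperx p.1 p.2.1 p.2.2)
    (fun p => by simpa [U] using hpery p.1 p.2.1 p.2.2) hpde' t₁ t₂

/-- Energy conservation for the logarithmic Schrödinger equation in 2D
    with periodic boundary conditions, for nowhere vanishing solutions. -/
theorem logse_energy_conservation_2d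
    (L₁ L₂ : ℝ) (hL₁ : 0 < L₁) (hL₂ : 0 < L₂) (lam : ℝ)
    (u : ℝ → ℝ → ℝ → ℂ)
    (hreg : ContDiff ℝ 2 (fun p : ℝ × ℝ × ℝ => u p.1 p.2.1 p.2.2))
    (hperx : ∀ t x y : ℝ, u t (x + L₁) y = u t x y)
    (hpery : ∀ t x y : ℝ, u t x (y + L₂) = u t x y)
    (hne : ∀ t x y : ℝ, u t x y ≠ 0)
    (hpde : ∀ t x y : ℝ,
      Complex.I * deriv (fun s => u s x y) t
        + deriv (deriv (fun x' => u t x' y)) x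
        + deriv (deriv (u t x)) y
        = (lam : ℂ) * u t x y * (Real.log ((‖u t x y‖) ^ 2) : ℂ)) :
    ∀ t₁ t₂ : ℝ,
      (∫ x in (0:ℝ)..L₁, ∫ y in (0:ℝ)..L₂,
          ((‖deriv (fun x' => u t₁ x' y) x‖) ^ 2
            + (‖deriv (u t₁ x) y‖) ^ 2
            + lam * (‖u t₁ x y‖) ^ 2
                * Real.log ((‖u t₁ x y‖) ^ 2)))
        = ∫ x in (0:ℝ)..L₁, ∫ y in (0:ℝ)..L₂,
            ((‖deriv (fun x' => u t₂ x' y) x‖) ^ 2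
              + (‖deriv (u t₂ x) y‖) ^ 2
              + lam * (‖u t₂ x y‖) ^ 2
                  * Real.log ((‖u t₂ x y‖) ^ 2)) :=
  logse_energy_conservation_2d_general L₁ L₂ lam u hreg hperx hpery hne hpde
end

section
/- Let F : ℝ × (ℝ × ℝ) → ℝ × ℝ be continuously differentiable, with F(0, (0,0)) = (0,0), and suppose the derivative of the map β ↦ F(0, β) at β = (0,0) is an invertible linear map of ℝ × ℝ. Let β : ℝ → ℝ × ℝ be continuous with β(0) = (0,0) and F(τ, β(τ)) = (0,0) for all τ in some interval [0, τ*], τ* > 0. Assume additionally that there exist C > 0, τ₁ > 0 and a natural number q ≥ 1 such that ‖F(τ, (0,0))‖ ≤ C·τ^q for all τ ∈ [0, τ₁]. Then there exist C' > 0 and τ₀ > 0 such that ‖β(τ)‖ ≤ C'·τ^q for all τ ∈ [0, τ₀]. -/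
/-!
Let `J` be the partial derivative of `F` in `β` at the origin. Since `F` is `C¹`, the map
`b ↦ J⁻¹ F(τ, b) - b` has derivative of norm at most `1/2` for `(τ, b)` near the origin, so by the
mean value inequality `‖b - b'‖ ≤ 2 ‖J⁻¹‖ ‖F(τ, b) - F(τ, b')‖` there. Taking `b = β(τ)`, which
is small by continuity, and `b' = 0` gives `‖β(τ)‖ ≤ 2 ‖J⁻¹‖ ‖F(τ, 0)‖ ≤ 2 ‖J⁻¹‖ C τ^q`.
-/

open Set Filter Topology Metric

variable {E G H : Type*} [NormedAddCommGroup E] [NormedSpace ℝ E]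
  [NormedAddCommGroup G] [NormedSpace ℝ G] [NormedAddCommGroup H] [NormedSpace ℝ H]

theorem Convex.mul_norm_sub_le_of_norm_symm_comp_fderiv_sub_id_le {s : Set G} (hs : Convex ℝ s)
    (J : G ≃L[ℝ] H) {f : G → H} {f' : G → G →L[ℝ] H}
    (hf : ∀ x ∈ s, HasFDerivWithinAt f (f' x) s x) {k : ℝ}
    (hk : ∀ x ∈ s, ‖(J.symm : H →L[ℝ] G) ∘L f' x - ContinuousLinearMap.id ℝ G‖ ≤ k)
    {a b : G} (ha : a ∈ s) (hb : b ∈ s) :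
    (1 - k) * ‖b - a‖ ≤ ‖(J.symm : H →L[ℝ] G)‖ * ‖f b - f a‖ := by
  have hderiv : ∀ x ∈ s, HasFDerivWithinAt (fun y => J.symm (f y))
      ((J.symm : H →L[ℝ] G) ∘L f' x) s x := fun x hx =>
    (J.symm : H →L[ℝ] G).hasFDerivAt.comp_hasFDerivWithinAt x (hf x hx)
  have hnear_id : ‖J.symm (f b) - J.symm (f a) - (b - a)‖ ≤ k * ‖b - a‖ :=
    hs.norm_image_sub_le_of_norm_hasFDerivWithin_le' hderiv hk ha hb
  have hsymm : ‖J.symm (f b - f a)‖ ≤ ‖(J.symm : H →L[ℝ] G)‖ * ‖f b - f a‖ :=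
    (J.symm : H →L[ℝ] G).le_opNorm _
  rw [map_sub] at hsymm
  have htri := norm_le_norm_add_norm_sub' (b - a) (J.symm (f b) - J.symm (f a))
  rw [← norm_neg (b - a - _), neg_sub] at htri
  linarith

theorem ContDiff.eventually_norm_symm_comp_partial_fderiv_sub_id_lt {F : E × G → H}
    (hF : ContDiff ℝ 1 F) (J : G ≃L[ℝ] H) {x₀ : E} {b₀ : G}
    (hJ : HasFDerivAt (fun b => F (x₀, b)) (J : G →L[ℝ] H) b₀) {k : ℝ} (hk : 0 < k) :
    ∀ᶠ p in 𝓝 (x₀, b₀), ‖(J.symm : H →L[ℝ] G) ∘L (fderiv ℝ F p ∘L ContinuousLinearMap.inr ℝ E G)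
      - ContinuousLinearMap.id ℝ G‖ < k := by
  have hpartial : fderiv ℝ F (x₀, b₀) ∘L ContinuousLinearMap.inr ℝ E G = J :=
    (((hF.differentiable one_ne_zero) _).hasFDerivAt.comp b₀
      (hasFDerivAt_prodMk_right x₀ b₀)).unique hJ
  have hcont : Continuous fun p => (J.symm : H →L[ℝ] G) ∘L
      (fderiv ℝ F p ∘L ContinuousLinearMap.inr ℝ E G) - ContinuousLinearMap.id ℝ G :=
    (continuous_const.clm_comp
      ((hF.continuous_fderiv one_ne_zero).clm_comp continuous_const)).sub continuous_const
  have hzero : (J.symm : H →L[ℝ] G) ∘L (fderiv ℝ F (x₀, b₀) ∘L ContinuousLinearMap.inr ℝ E G)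
      - ContinuousLinearMap.id ℝ G = 0 := by
    rw [hpartial, sub_eq_zero]
    exact J.coe_symm_comp_coe
  refine (hcont.norm.tendsto (x₀, b₀)).eventually (gt_mem_nhds ?_)
  rwa [hzero, norm_zero]

theorem ContDiff.exists_pos_forall_norm_sub_le {F : E × G → H} (hF : ContDiff ℝ 1 F)
    (J : G ≃L[ℝ] H) {x₀ : E} {b₀ : G}
    (hJ : HasFDerivAt (fun b => F (x₀, b)) (J : G →L[ℝ] H) b₀) :
    ∃ δ > 0, ∀ x ∈ ball x₀ δ, ∀ b ∈ ball b₀ δ,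
      ‖b - b₀‖ ≤ 2 * ‖(J.symm : H →L[ℝ] G)‖ * ‖F (x, b) - F (x, b₀)‖ := by
  obtain ⟨δ, hδ, hsmall⟩ := eventually_nhds_iff_ball.mp
    (hF.eventually_norm_symm_comp_partial_fderiv_sub_id_lt J hJ one_half_pos)
  refine ⟨δ, hδ, fun x hx b hb => ?_⟩
  have hpartial : ∀ c ∈ ball b₀ δ, HasFDerivWithinAt (fun c => F (x, c))
      (fderiv ℝ F (x, c) ∘L ContinuousLinearMap.inr ℝ E G) (ball b₀ δ) c := fun c _ =>
    (((hF.differentiable one_ne_zero) _).hasFDerivAt.comp c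
      (hasFDerivAt_prodMk_right x c)).hasFDerivWithinAt
  have hbound := (convex_ball b₀ δ).mul_norm_sub_le_of_norm_symm_comp_fderiv_sub_id_le J hpartial
    (fun c hc => (hsmall (x, c) (by rw [← ball_prod_same]; exact ⟨hx, hc⟩)).le)
    (mem_ball_self hδ) hb
  linarith

theorem svm_supplementary_variables_order_general
    (F : ℝ × (ℝ × ℝ) → ℝ × ℝ)
    (hF : ContDiff ℝ 1 F)
    (J : (ℝ × ℝ) ≃L[ℝ] (ℝ × ℝ))
    (hJ : HasFDerivAt (fun b : ℝ × ℝ => F (0, b))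
            (J : (ℝ × ℝ) →L[ℝ] (ℝ × ℝ)) (0, 0))
    (β : ℝ → ℝ × ℝ) (hβcont : Continuous β) (hβ0 : β 0 = (0, 0))
    (τstar : ℝ) (hτstar : 0 < τstar)
    (hβ : ∀ τ ∈ Set.Icc (0 : ℝ) τstar, F (τ, β τ) = (0, 0))
    (C τ₁ : ℝ) (hC : 0 < C) (hτ₁ : 0 < τ₁) (q : ℕ)
    (hFbound : ∀ τ ∈ Set.Icc (0 : ℝ) τ₁, ‖F (τ, (0, 0))‖ ≤ C * τ ^ q) :
    ∃ C' : ℝ, 0 < C' ∧ ∃ τ₀ : ℝ, 0 < τ₀ ∧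
      ∀ τ ∈ Set.Icc (0 : ℝ) τ₀, ‖β τ‖ ≤ C' * τ ^ q := by
  obtain ⟨δ, hδ, hstable⟩ := hF.exists_pos_forall_norm_sub_le J hJ
  have hβsmall : ∀ᶠ τ in 𝓝 0, β τ ∈ ball (0, 0) δ :=
    hβcont.continuousAt.preimage_mem_nhds (hβ0 ▸ ball_mem_nhds _ hδ)
  have hτsmall : ∀ᶠ τ in 𝓝 (0 : ℝ), τ ∈ ball 0 δ := ball_mem_nhds 0 hδ
  obtain ⟨ε, hε, hnear⟩ := eventually_nhds_iff_ball.mp <| (eventually_le_nhds hτstar).and <|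
    (eventually_le_nhds hτ₁).and <| hτsmall.and hβsmall
  set M := ‖(J.symm : (ℝ × ℝ) →L[ℝ] (ℝ × ℝ))‖
  refine ⟨2 * M * C, by positivity [J.norm_symm_pos], ε / 2, half_pos hε, ?_⟩
  rintro τ ⟨hτ0, hτε⟩
  obtain ⟨hτstar', hτ₁', hτδ, hβδ⟩ :=
    hnear τ (by rw [mem_ball, Real.dist_eq, sub_zero, abs_of_nonneg hτ0]; linarith)
  calc ‖β τ‖ = ‖β τ - (0, 0)‖ := by rw [Prod.mk_zero_zero, sub_zero]
    _ ≤ 2 * M * ‖F (τ, β τ) - F (τ, (0, 0))‖ := hstable τ hτδ (β τ) hβδ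
    _ = 2 * M * ‖F (τ, (0, 0))‖ := by
      rw [hβ τ ⟨hτ0, hτstar'⟩, Prod.mk_zero_zero, zero_sub, norm_neg]
    _ ≤ 2 * M * (C * τ ^ q) := by gcongr; exact hFbound τ ⟨hτ0, hτ₁'⟩
    _ = 2 * M * C * τ ^ q := by ring

/-- The supplementary variables inherit the consistency order of the scheme:
    if ‖F(τ, 0)‖ = O(τ^q), then the solution β(τ) of F(τ, β(τ)) = 0
    satisfies ‖β(τ)‖ = O(τ^q). -/
theorem svm_supplementary_variables_order
    (F : ℝ × (ℝ × ℝ) → ℝ × ℝ)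
    (hF : ContDiff ℝ 1 F)
    (hF0 : F (0, (0, 0)) = (0, 0))
    (J : (ℝ × ℝ) ≃L[ℝ] (ℝ × ℝ))
    (hJ : HasFDerivAt (fun b : ℝ × ℝ => F (0, b))
            (J : (ℝ × ℝ) →L[ℝ] (ℝ × ℝ)) (0, 0))
    (β : ℝ → ℝ × ℝ) (hβcont : Continuous β) (hβ0 : β 0 = (0, 0))
    (τstar : ℝ) (hτstar : 0 < τstar)
    (hβ : ∀ τ ∈ Set.Icc (0 : ℝ) τstar, F (τ, β τ) = (0, 0))
    (C τ₁ : ℝ) (hC : 0 < C) (hτ₁ : 0 < τ₁) (q : ℕ) (hq : 1 ≤ q)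
    (hFbound : ∀ τ ∈ Set.Icc (0 : ℝ) τ₁, ‖F (τ, (0, 0))‖ ≤ C * τ ^ q) :
    ∃ C' : ℝ, 0 < C' ∧ ∃ τ₀ : ℝ, 0 < τ₀ ∧
      ∀ τ ∈ Set.Icc (0 : ℝ) τ₀, ‖β τ‖ ≤ C' * τ ^ q :=
  svm_supplementary_variables_order_general F hF J hJ β hβcont hβ0 τstar hτstar hβ C τ₁ hC hτ₁ q
    hFbound
end
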